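/- Let p ≥ 3 be a prime, k ∈ ℕ₊ with p²(p−1) | k, and r ∈ {1,…,p−2}. Then for every integer n > k/(p−1) such that n mod p ∈ {r+1,…,p−1}, one has A_{p,k−r}(n) ≡ 0 (mod p^{ν_p(k)}). -/

import Mathlib

open PowerSeries Finset

/-- The number of digits equal to `i` in the base-`p` representation of `n`. -/
def Np (p i n : ℕ) : ℕ := (Nat.digits p n).count i

/-- `Dcoef p r n` is the coefficient of `x^n` in `∏_{i=0}^∞ (1 - x^{p^i})^r`.
Since `p ≥ 2`, the factors with index `i > n` do not affect the coefficient of `x^n`,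
so the product may be truncated at `i = n`. -/
noncomputable def Dcoef (p r n : ℕ) : ℤ :=
  PowerSeries.coeff (R := ℤ) n (∏ i ∈ Finset.range (n + 1), (1 - PowerSeries.X ^ p ^ i) ^ r)

/-- `Dp p n = D_{p,p-1}(n)`. -/
noncomputable def Dp (p n : ℕ) : ℤ := Dcoef p (p - 1) n

/-- `Acoef m k n` is the coefficient of `x^n` in `∏_{i=0}^∞ (1 - x^{m^i})^{-k}`,
the number of `k`-colored `m`-ary partitions of `n`.  Here `(1 - X^{m^i})⁻¹` is
realized as `PowerSeries.invOfUnit (1 - X ^ m ^ i) 1`, and since `m ≥ 2` the factors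
with index `i > n` do not affect the coefficient of `x^n`. -/
noncomputable def Acoef (m k n : ℕ) : ℤ :=
  PowerSeries.coeff (R := ℤ) n
    (∏ i ∈ Finset.range (n + 1),
      (PowerSeries.invOfUnit (1 - PowerSeries.X ^ m ^ i) 1) ^ k)

/-!
Write `H = ∏_{i ≤ n} (1 - X^{p^i})` and `k = (p - 1) K` with `K = p L`. Modulo `p`,
`(1 - a)^p ≡ 1 - a^p`, so `(1 - X) H^p ≡ H (1 - X^{p^{n+1}})`. Since `p^{ν_p(k)}` divides `K`,
raising to the `K`-th power turns this into an equality modulo `p^{ν_p(k)}`, namely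
`(1 - X)^K H^k = (1 - X^{p^{n+1}})^K`. Hence, up to terms of degree `> n`,
`H^{-(k-r)} = (1 - X)^K H^r = (1 - X)^r (1 - X^p)^L ∏_{1 ≤ i ≤ n} (1 - X^{p^i})^r`:
a polynomial of degree `≤ r` times a series in `X^p`. Its coefficient of `X^n` vanishes
because `r < n mod p`.
-/

theorem pow_eq_pow_of_natCast_dvd_sub {R : Type*} [CommRing R] {p s N : ℕ}
    (hR : (p : R) ^ (s + 1) = 0) (hN : p ^ s ∣ N) {a b : R} (hab : (p : R) ∣ a - b) :
    a ^ N = b ^ N := by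
  obtain ⟨m, rfl⟩ := hN
  have h := dvd_sub_pow_of_dvd_sub hab s
  rw [hR, zero_dvd_iff, sub_eq_zero] at h
  rw [pow_mul, pow_mul, h]

theorem natCast_dvd_one_sub_pow_sub {R : Type*} [CommRing R] {p : ℕ} (hp : p.Prime) (a : R) :
    (p : R) ∣ (1 - a) ^ p - (1 - a ^ p) := by
  obtain ⟨t, ht⟩ := exists_add_pow_prime_eq hp (1 - a) a
  rw [sub_add_cancel, one_pow] at ht
  exact ⟨-((1 - a) * a * t), by linear_combination -ht⟩

namespace PowerSeries

variable {R : Type*} [CommRing R]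

theorem isUnit_one_sub_X_pow {m : ℕ} (hm : m ≠ 0) : IsUnit (1 - X ^ m : R⟦X⟧) := by
  simp [isUnit_iff_constantCoeff, zero_pow hm]

theorem coeff_mul_eq_of_X_pow_dvd_sub_one {m n : ℕ} (hnm : n < m) (f : R⟦X⟧) {g : R⟦X⟧}
    (hg : X ^ m ∣ g - 1) : coeff n (f * g) = coeff n f := by
  have h : X ^ m ∣ f * g - f := by simpa [mul_sub] using dvd_mul_of_dvd_right hg f
  rw [← sub_eq_zero, ← map_sub]
  exact X_pow_dvd_iff.mp h n hnm

theorem X_pow_dvd_one_sub_X_pow_pow_sub_one (m K : ℕ) :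
    (X : R⟦X⟧) ^ m ∣ (1 - X ^ m) ^ K - 1 := by
  have h := sub_dvd_pow_sub_pow (1 : R⟦X⟧) (1 - X ^ m) K
  rwa [sub_sub_cancel, one_pow, dvd_sub_comm] at h

theorem coeff_one_sub_X_pow_of_lt {r a : ℕ} (h : r < a) : coeff a ((1 - X : R⟦X⟧) ^ r) = 0 := by
  have hpoly : (1 - X : R⟦X⟧) ^ r = (((1 - Polynomial.X) ^ r : Polynomial R) : R⟦X⟧) := by simp
  rw [hpoly, Polynomial.coeff_coe]
  apply Polynomial.coeff_eq_zero_of_natDegree_lt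
  calc _ ≤ r := by compute_degree
    _ < a := h

theorem coeff_one_sub_X_pow_mul_expand_eq_zero {p r n : ℕ} (hp : p ≠ 0) (hr : r < n % p)
    (f : R⟦X⟧) : coeff n ((1 - X) ^ r * expand p hp f) = 0 := by
  rw [coeff_mul]
  refine sum_eq_zero fun ⟨a, b⟩ hab => ?_
  rw [HasAntidiagonal.mem_antidiagonal] at hab
  rcases lt_or_ge r a with hra | hra
  · rw [coeff_one_sub_X_pow_of_lt hra, zero_mul]
  · have hnp := Nat.mod_lt n (Nat.pos_of_ne_zero hp)
    have hb : ¬ p ∣ b := fun ⟨c, hc⟩ => by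
      have : n % p = a := by
        rw [← hab, hc, Nat.add_mul_mod_self_left, Nat.mod_eq_of_lt (by omega)]
      omega
    rw [coeff_expand_of_not_dvd p hp f hb, mul_zero]

theorem natCast_dvd_one_sub_X_mul_prod_pow_sub {p : ℕ} (hp : p.Prime) (n : ℕ) :
    (p : R⟦X⟧) ∣ (1 - X) * (∏ i ∈ range (n + 1), (1 - X ^ p ^ i)) ^ p
      - (∏ i ∈ range (n + 1), (1 - X ^ p ^ i)) * (1 - X ^ p ^ (n + 1)) := by
  let π := Ideal.Quotient.mk (Ideal.span {(p : R⟦X⟧)})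
  have hπ : ∀ a b : R⟦X⟧, (p : R⟦X⟧) ∣ a - b ↔ π a = π b := fun a b => by
    rw [Ideal.Quotient.eq, Ideal.mem_span_singleton]
  have hfactor : ∀ i, π ((1 - X ^ p ^ i) ^ p) = π (1 - X ^ p ^ (i + 1)) := fun i => by
    rw [← hπ, pow_succ, pow_mul]
    exact natCast_dvd_one_sub_pow_sub hp _
  rw [hπ, map_mul, map_mul, ← prod_pow, map_prod, prod_congr rfl fun i _ => hfactor i,
    ← map_prod, ← map_mul, ← map_mul, ← prod_range_succ (fun i => 1 - X ^ p ^ i),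
    prod_range_succ' (fun i => 1 - X ^ p ^ i), pow_zero, pow_one, mul_comm]

theorem natCast_pow_eq_zero {p m : ℕ} (hR : (p : R) ^ m = 0) : (p : R⟦X⟧) ^ m = 0 := by
  rw [← map_natCast C, ← map_pow, hR, map_zero]

theorem one_sub_X_pow_mul_prod_pow_eq {p s K : ℕ} (hp : p.Prime) (hR : (p : R) ^ (s + 1) = 0)
    (hK : p ^ s ∣ K) (n : ℕ) :
    (1 - X) ^ K * (∏ i ∈ range (n + 1), (1 - X ^ p ^ i : R⟦X⟧)) ^ ((p - 1) * K)
      = (1 - X ^ p ^ (n + 1)) ^ K := by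
  set H := ∏ i ∈ range (n + 1), (1 - X ^ p ^ i : R⟦X⟧)
  have hH : IsUnit H :=
    IsUnit.prod_iff.mpr fun i _ => isUnit_one_sub_X_pow (pow_ne_zero i hp.ne_zero)
  have h := pow_eq_pow_of_natCast_dvd_sub (natCast_pow_eq_zero hR) hK
    (natCast_dvd_one_sub_X_mul_prod_pow_sub hp n)
  have hpK : p * K = K + (p - 1) * K := by
    rw [Nat.sub_one_mul, Nat.add_sub_cancel' (Nat.le_mul_of_pos_left K hp.pos)]
  rw [mul_pow, mul_pow, ← pow_mul, hpK, pow_add] at h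
  exact (hH.pow K).mul_left_cancel (by linear_combination h)

theorem coeff_eq_zero_of_mul_prod_pow_eq_one {p s L r n : ℕ} (hp : p.Prime)
    (hR : (p : R) ^ (s + 1) = 0) (hL : p ^ s ∣ L) (hrk : r ≤ (p - 1) * (p * L))
    (hr : r < n % p) {T : R⟦X⟧}
    (hT : T * (∏ i ∈ range (n + 1), (1 - X ^ p ^ i)) ^ ((p - 1) * (p * L) - r) = 1) :
    coeff n T = 0 := by
  obtain ⟨j, hj⟩ : ∃ j, (p - 1) * (p * L) = r + j := ⟨_, (Nat.add_sub_cancel' hrk).symm⟩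
  have hmain := one_sub_X_pow_mul_prod_pow_eq hp hR (dvd_mul_of_dvd_right hL p) n
  rw [hj, Nat.add_sub_cancel_left] at hT
  rw [hj, pow_add] at hmain
  set H := ∏ i ∈ range (n + 1), (1 - X ^ p ^ i : R⟦X⟧)
  have hTF : T * (1 - X ^ p ^ (n + 1)) ^ (p * L) = (1 - X) ^ (p * L) * H ^ r := by
    linear_combination (-T) * hmain + ((1 - X) ^ (p * L) * H ^ r) * hT
  have hfrob : (1 - X : R⟦X⟧) ^ (p * L) = (1 - X ^ p) ^ L := by
    rw [pow_mul]
    exact pow_eq_pow_of_natCast_dvd_sub (natCast_pow_eq_zero hR) hL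
      (natCast_dvd_one_sub_pow_sub hp X)
  have hHr : H ^ r = (1 - X) ^ r * ∏ i ∈ range n, (1 - X ^ p ^ (i + 1)) ^ r := by
    rw [← prod_pow, prod_range_succ', pow_zero, pow_one, mul_comm]
  have hexpand : expand p hp.ne_zero ((1 - X : R⟦X⟧) ^ L * ∏ i ∈ range n, (1 - X ^ p ^ i) ^ r)
      = (1 - X ^ p) ^ L * ∏ i ∈ range n, (1 - X ^ p ^ (i + 1)) ^ r := by
    simp [map_prod, pow_succ', pow_mul]
  calc coeff n T = coeff n (T * (1 - X ^ p ^ (n + 1)) ^ (p * L)) :=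
        (coeff_mul_eq_of_X_pow_dvd_sub_one
          ((Nat.lt_pow_self hp.one_lt).trans (Nat.pow_lt_pow_right hp.one_lt n.lt_succ_self)) T
          (X_pow_dvd_one_sub_X_pow_pow_sub_one _ _)).symm
    _ = coeff n ((1 - X) ^ r
          * expand p hp.ne_zero ((1 - X : R⟦X⟧) ^ L * ∏ i ∈ range n, (1 - X ^ p ^ i) ^ r)) := by
        rw [hTF, hfrob, hHr, hexpand, mul_left_comm]
    _ = 0 := coeff_one_sub_X_pow_mul_expand_eq_zero hp.ne_zero hr _

theorem prod_invOfUnit_pow_mul_prod_pow {p : ℕ} (hp : p ≠ 0) (k n : ℕ) :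
    (∏ i ∈ range (n + 1), invOfUnit (1 - X ^ p ^ i : R⟦X⟧) 1 ^ k)
      * (∏ i ∈ range (n + 1), (1 - X ^ p ^ i : R⟦X⟧)) ^ k = 1 := by
  rw [← prod_pow, ← prod_mul_distrib]
  refine prod_eq_one fun i _ => ?_
  rw [← mul_pow, invOfUnit_mul _ _ (by simp [zero_pow (pow_ne_zero i hp)]), one_pow]

end PowerSeries

theorem pow_succ_dvd_Acoef {p s L r n : ℕ} (hp : p.Prime) (hL : p ^ s ∣ L)
    (hrk : r ≤ (p - 1) * (p * L)) (hr : r < n % p) :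
    (p : ℤ) ^ (s + 1) ∣ Acoef p ((p - 1) * (p * L) - r) n := by
  set k := (p - 1) * (p * L) - r
  let π := Int.castRingHom (ZMod (p ^ (s + 1)))
  have hR : (p : ZMod (p ^ (s + 1))) ^ (s + 1) = 0 := by rw [← Nat.cast_pow, ZMod.natCast_self]
  have hT : map π (∏ i ∈ range (n + 1), invOfUnit (1 - X ^ p ^ i : ℤ⟦X⟧) 1 ^ k)
      * (∏ i ∈ range (n + 1), (1 - X ^ p ^ i)) ^ k = 1 := by
    simpa [map_prod] using congrArg (map π) (prod_invOfUnit_pow_mul_prod_pow hp.ne_zero k n)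
  have h := coeff_eq_zero_of_mul_prod_pow_eq_one hp hR hL hrk hr hT
  rwa [coeff_map, eq_intCast, ZMod.intCast_zmod_eq_zero_iff_dvd, Nat.cast_pow] at h

theorem stmt17_general (p k r : ℕ) (hp : p.Prime) (hk : 1 ≤ k)
    (hdvd : p ^ 2 * (p - 1) ∣ k)
    (n : ℕ) (hmod1 : r + 1 ≤ n % p) :
    (p : ℤ) ^ padicValNat p k ∣ Acoef p (k - r) n := by
  have := Fact.mk hp
  have := hp.two_le
  have hpk : p ∣ k := (dvd_pow_self p two_ne_zero).trans ((Dvd.intro _ rfl).trans hdvd)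
  have hrk : r ≤ k := by
    have := Nat.mod_lt n hp.pos
    have := Nat.le_of_dvd hk hpk
    omega
  obtain ⟨s, hs⟩ : ∃ s, padicValNat p k = s + 1 :=
    ⟨_, (Nat.succ_pred_eq_of_pos (one_le_padicValNat_of_dvd (by omega) hpk)).symm⟩
  have hpow : p ^ (s + 1) ∣ k := hs ▸ pow_padicValNat_dvd
  obtain ⟨m, rfl⟩ := hdvd
  rw [show p ^ 2 * (p - 1) * m = (p - 1) * (p * (p * m)) by ring] at hs hpow hrk ⊢
  have hcop : (p ^ (s + 1)).Coprime (p - 1) :=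
    (hp.coprime_iff_not_dvd.mpr (Nat.not_dvd_of_pos_of_lt (by omega) (by omega))).pow_left _
  have hL : p ^ s ∣ p * m := by
    rw [← Nat.mul_dvd_mul_iff_left hp.pos, ← pow_succ']
    exact hcop.dvd_of_dvd_mul_left hpow
  rw [hs]
  exact pow_succ_dvd_Acoef hp hL hrk (by omega)

theorem stmt17 (p k r : ℕ) (hp : p.Prime) (hp3 : 3 ≤ p) (hk : 1 ≤ k)
    (hdvd : p ^ 2 * (p - 1) ∣ k) (hr1 : 1 ≤ r) (hr2 : r ≤ p - 2)
    (n : ℕ) (hn : k / (p - 1) < n) (hmod1 : r + 1 ≤ n % p) (hmod2 : n % p ≤ p - 1) :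
    (p : ℤ) ^ padicValNat p k ∣ Acoef p (k - r) n :=
  stmt17_general p k r hp hk hdvd n hmod1
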